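/- Let (e₁, e₂, e₃, e₄) be the standard orthonormal basis of Euclidean space ℝ⁴, and let Φ(F₄) be the set consisting of the 24 vectors ε·e_i + ε'·e_j (ε, ε' ∈ {1,−1}, 1 ≤ i < j ≤ 4), the 8 vectors ε·e_i (ε ∈ {1,−1}, 1 ≤ i ≤ 4), and the 16 vectors (ε₁/2, ε₂/2, ε₃/2, ε₄/2) with ε_k ∈ {1,−1}. Suppose ω ∈ ℝ⁴ satisfies ⟨ω, α⟩ ≠ 0 for every α ∈ Φ(F₄). Then for every real number t, the set {γ ∈ Φ(F₄) : ‖γ‖² = 1 and ⟨ω, γ⟩ = t} has at most 2 elements, and the set {α ∈ Φ(F₄) : ‖α‖² = 2 and ⟨ω, α⟩ = t} has at most 2 elements. -/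
import Mathlib


open scoped RealInnerProductSpace

/-- The standard basis vector `e_i` of `ℝ⁴`. -/
noncomputable def e4 (i : Fin 4) : EuclideanSpace ℝ (Fin 4) := EuclideanSpace.single i (1 : ℝ)

/-- The root system of type `F₄` in `ℝ⁴`: the 24 long roots `±e_i ± e_j` (`i < j`), the
8 short roots `±e_i`, and the 16 short roots `(±1/2, ±1/2, ±1/2, ±1/2)`. -/
def PhiF4 : Set (EuclideanSpace ℝ (Fin 4)) :=
  {v | ∃ (ε δ : ℝ) (i j : Fin 4), (ε = 1 ∨ ε = -1) ∧ (δ = 1 ∨ δ = -1) ∧ i < j ∧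
      v = ε • e4 i + δ • e4 j} ∪
  {v | ∃ (ε : ℝ) (i : Fin 4), (ε = 1 ∨ ε = -1) ∧ v = ε • e4 i} ∪
  {v | ∃ ε : Fin 4 → ℝ, (∀ k, ε k = 1 ∨ ε k = -1) ∧
      v = (1 / 2 : ℝ) • (ε 0 • e4 0 + ε 1 • e4 1 + ε 2 • e4 2 + ε 3 • e4 3)}

lemma innerA (ω : EuclideanSpace ℝ (Fin 4)) (a : ℝ) (i : Fin 4) : ⟪ω, a • e4 i⟫ = a * ω i := by
  simp [e4, real_inner_smul_right, EuclideanSpace.inner_single_right]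

lemma innerL (ω : EuclideanSpace ℝ (Fin 4)) (a b : ℝ) (i j : Fin 4) :
    ⟪ω, a • e4 i + b • e4 j⟫ = a * ω i + b * ω j := by
  simp [e4, inner_add_right, real_inner_smul_right, EuclideanSpace.inner_single_right]

lemma e4_inner (i j : Fin 4) : ⟪e4 i, e4 j⟫ = if j = i then (1:ℝ) else 0 := by
  simp [e4, EuclideanSpace.inner_single_right, EuclideanSpace.single_apply]

lemma normL (a b : ℝ) (i j : Fin 4) (hij : i ≠ j) (ha : a = 1 ∨ a = -1) (hb : b = 1 ∨ b = -1) :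
    ‖a • e4 i + b • e4 j‖^2 = 2 := by
  rw [← real_inner_self_eq_norm_sq]
  simp only [inner_add_left, inner_add_right, real_inner_smul_left, real_inner_smul_right, e4_inner]
  simp [hij, Ne.symm hij]
  rcases ha with rfl|rfl <;> rcases hb with rfl|rfl <;> norm_num

lemma normA (a : ℝ) (i : Fin 4) (ha : a = 1 ∨ a = -1) : ‖a • e4 i‖^2 = 1 := by
  rw [← real_inner_self_eq_norm_sq]
  simp only [real_inner_smul_left, real_inner_smul_right, e4_inner, if_pos rfl]
  rcases ha with rfl|rfl <;> norm_num

lemma innerB (ω : EuclideanSpace ℝ (Fin 4)) (ε : Fin 4 → ℝ) :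
    ⟪ω, (1/2:ℝ) • (ε 0 • e4 0 + ε 1 • e4 1 + ε 2 • e4 2 + ε 3 • e4 3)⟫
      = (ε 0 * ω 0 + ε 1 * ω 1 + ε 2 * ω 2 + ε 3 * ω 3)/2 := by
  simp [e4, inner_add_right, real_inner_smul_right, EuclideanSpace.inner_single_right]
  ring

lemma normB (ε : Fin 4 → ℝ) (hε : ∀ k, ε k = 1 ∨ ε k = -1) :
    ‖(1/2:ℝ) • (ε 0 • e4 0 + ε 1 • e4 1 + ε 2 • e4 2 + ε 3 • e4 3)‖^2 = 1 := by
  rw [← real_inner_self_eq_norm_sq]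
  simp only [inner_add_left, inner_add_right, real_inner_smul_left, real_inner_smul_right, e4_inner]
  norm_num
  rcases hε 0 with h0|h0 <;> rcases hε 1 with h1|h1 <;> rcases hε 2 with h2|h2 <;>
    rcases hε 3 with h3|h3 <;> rw [h0,h1,h2,h3] <;> simp <;> norm_num



lemma memL (a b : ℝ) (i j : Fin 4) (ha : a = 1 ∨ a = -1) (hb : b = 1 ∨ b = -1) (hij : i < j) :
    a • e4 i + b • e4 j ∈ PhiF4 := Or.inl (Or.inl ⟨a,b,i,j,ha,hb,hij,rfl⟩)
lemma memA (a : ℝ) (i : Fin 4) (ha : a = 1 ∨ a = -1) : a • e4 i ∈ PhiF4 :=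
  Or.inl (Or.inr ⟨a,i,ha,rfl⟩)
lemma memB (ε : Fin 4 → ℝ) (hε : ∀ k, ε k = 1 ∨ ε k = -1) :
    (1/2:ℝ) • (ε 0 • e4 0 + ε 1 • e4 1 + ε 2 • e4 2 + ε 3 • e4 3) ∈ PhiF4 :=
  Or.inr ⟨ε,hε,rfl⟩

section
variable {ω : EuclideanSpace ℝ (Fin 4)} (hω : ∀ α ∈ PhiF4, ⟪ω, α⟫ ≠ 0)
include hω

lemma reg1 (k : Fin 4) : ω k ≠ 0 := by
  have := hω _ (memA 1 k (Or.inl rfl))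
  rw [innerA] at this; simpa using this

lemma reg2s (i j : Fin 4) (hij : i ≠ j) : ω i + ω j ≠ 0 := by
  rcases lt_or_gt_of_ne hij with h|h
  · have := hω _ (memL 1 1 i j (Or.inl rfl) (Or.inl rfl) h)
    rw [innerL] at this; intro hh; exact this (by linarith)
  · have := hω _ (memL 1 1 j i (Or.inl rfl) (Or.inl rfl) h)
    rw [innerL] at this; intro hh; exact this (by linarith)

lemma reg2d (i j : Fin 4) (hij : i ≠ j) : ω i - ω j ≠ 0 := by
  rcases lt_or_gt_of_ne hij with h|h
  · have := hω _ (memL 1 (-1) i j (Or.inl rfl) (Or.inr rfl) h)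
    rw [innerL] at this; intro hh; exact this (by linarith)
  · have := hω _ (memL 1 (-1) j i (Or.inl rfl) (Or.inr rfl) h)
    rw [innerL] at this; intro hh; exact this (by linarith)

lemma reg4 (a b c d : ℝ) (ha : a = 1 ∨ a = -1) (hb : b = 1 ∨ b = -1)
    (hc : c = 1 ∨ c = -1) (hd : d = 1 ∨ d = -1) :
    a * ω 0 + b * ω 1 + c * ω 2 + d * ω 3 ≠ 0 := by
  have := hω _ (memB ![a,b,c,d] (by intro k; fin_cases k <;> simpa))
  rw [innerB] at this
  simp only [Matrix.cons_val_zero, Matrix.cons_val_one, Matrix.head_cons,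
    Matrix.cons_val_two, Matrix.tail_cons, Matrix.cons_val_three] at this
  intro hh; exact this (by linarith)

end

lemma pmneg {a : ℝ} (ha : a = 1 ∨ a = -1) : -a = 1 ∨ -a = -1 := by
  rcases ha with rfl|rfl <;> norm_num

section
variable {ω : EuclideanSpace ℝ (Fin 4)}
  (h1 : ∀ k, ω k ≠ 0) (h2s : ∀ i j, i ≠ j → ω i + ω j ≠ 0)
  (h2d : ∀ i j, i ≠ j → ω i - ω j ≠ 0)
  (h4 : ∀ a b c d : ℝ, (a = 1 ∨ a = -1) → (b = 1 ∨ b = -1) → (c = 1 ∨ c = -1) →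
    (d = 1 ∨ d = -1) → a * ω 0 + b * ω 1 + c * ω 2 + d * ω 3 ≠ 0)
include h1 h2s h2d h4

/-- Two long roots with the same pairing value: either identical parameters, or they share
exactly one index, with opposite signs there. -/
lemma longPair {a b c d t : ℝ} {i j k l : Fin 4} (hij : i < j) (hkl : k < l)
    (ha : a = 1 ∨ a = -1) (hb : b = 1 ∨ b = -1) (hc : c = 1 ∨ c = -1) (hd : d = 1 ∨ d = -1)
    (hx : a * ω i + b * ω j = t) (hy : c * ω k + d * ω l = t) :
    (i = k ∧ j = l ∧ a = c ∧ b = d) ∨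
    (i = k ∧ j ≠ l ∧ a = -c) ∨ (i = l ∧ a = -d) ∨ (j = k ∧ b = -c) ∨
    (j = l ∧ i ≠ k ∧ b = -d) := by
  have hac : a = c ∨ a = -c := by rcases ha with rfl|rfl <;> rcases hc with rfl|rfl <;> norm_num
  have had : a = d ∨ a = -d := by rcases ha with rfl|rfl <;> rcases hd with rfl|rfl <;> norm_num
  have hbc : b = c ∨ b = -c := by rcases hb with rfl|rfl <;> rcases hc with rfl|rfl <;> norm_num
  have hbd : b = d ∨ b = -d := by rcases hb with rfl|rfl <;> rcases hd with rfl|rfl <;> norm_num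
  rcases eq_or_ne i k with rfl|hik
  · rcases eq_or_ne j l with rfl|hjl
    · -- same index pair
      rcases hac with h|h
      · rcases hbd with h'|h'
        · exact Or.inl ⟨rfl, rfl, h, h'⟩
        · exfalso; rw [h, h'] at hx
          have : d * ω j = 0 := by linarith
          rcases hd with rfl|rfl <;> exact h1 j (by linarith)
      · exfalso; rcases hbd with h'|h'
        · rw [h, h'] at hx
          have : c * ω i = 0 := by linarith
          rcases hc with rfl|rfl <;> exact h1 i (by linarith)
        · rw [h, h'] at hx
          have h0 : c * ω i + d * ω j = 0 := by linarith
          rcases hc with rfl|rfl <;> rcases hd with rfl|rfl <;>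
            first
            | exact h2s i j (ne_of_lt hij) (by linarith)
            | exact h2d i j (ne_of_lt hij) (by linarith)
    · -- share first index only
      rcases hac with h|h
      · exfalso; rw [h] at hx
        have h0 : b * ω j - d * ω l = 0 := by linarith
        rcases hb with rfl|rfl <;> rcases hd with rfl|rfl <;>
          first
          | exact h2s j l hjl (by linarith)
          | exact h2d j l hjl (by linarith)
      · exact Or.inr (Or.inl ⟨rfl, hjl, h⟩)
  · rcases eq_or_ne j l with rfl|hjl
    · rcases hbd with h|h
      · exfalso; rw [h] at hx
        have h0 : a * ω i - c * ω k = 0 := by linarith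
        rcases ha with rfl|rfl <;> rcases hc with rfl|rfl <;>
          first
          | exact h2s i k hik (by linarith)
          | exact h2d i k hik (by linarith)
      · exact Or.inr (Or.inr (Or.inr (Or.inr ⟨rfl, hik, h⟩)))
    · rcases eq_or_ne i l with rfl|hil
      · rcases had with h|h
        · exfalso; rw [h] at hx
          have hjk : j ≠ k := by omega
          have h0 : b * ω j - c * ω k = 0 := by linarith
          rcases hb with rfl|rfl <;> rcases hc with rfl|rfl <;>
            first
            | exact h2s j k hjk (by linarith)
            | exact h2d j k hjk (by linarith)
        · exact Or.inr (Or.inr (Or.inl ⟨rfl, h⟩))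
      · rcases eq_or_ne j k with rfl|hjk
        · rcases hbc with h|h
          · exfalso; rw [h] at hx
            have h0 : a * ω i - d * ω l = 0 := by linarith
            rcases ha with rfl|rfl <;> rcases hd with rfl|rfl <;>
              first
              | exact h2s i l hil (by linarith)
              | exact h2d i l hil (by linarith)
          · exact Or.inr (Or.inr (Or.inr (Or.inl ⟨rfl, h⟩)))
        · -- disjoint supports
          exfalso
          fin_cases i <;> fin_cases j <;> fin_cases k <;> fin_cases l <;>
            first
            | exact absurd hij (by decide)
            | exact absurd hkl (by decide)
            | exact absurd rfl hik
            | exact absurd rfl hjk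
            | exact absurd rfl hil
            | exact absurd rfl hjl
            | exact h4 a b (-c) (-d) ha hb (pmneg hc) (pmneg hd) (by have hx' : a * ω 0 + b * ω 1 = t := hx; have hy' : c * ω 2 + d * ω 3 = t := hy; linarith)
            | exact h4 a (-c) b (-d) ha (pmneg hc) hb (pmneg hd) (by have hx' : a * ω 0 + b * ω 2 = t := hx; have hy' : c * ω 1 + d * ω 3 = t := hy; linarith)
            | exact h4 a (-c) (-d) b ha (pmneg hc) (pmneg hd) hb (by have hx' : a * ω 0 + b * ω 3 = t := hx; have hy' : c * ω 1 + d * ω 2 = t := hy; linarith)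
            | exact h4 (-c) a b (-d) (pmneg hc) ha hb (pmneg hd) (by have hx' : a * ω 1 + b * ω 2 = t := hx; have hy' : c * ω 0 + d * ω 3 = t := hy; linarith)
            | exact h4 (-c) a (-d) b (pmneg hc) ha (pmneg hd) hb (by have hx' : a * ω 1 + b * ω 3 = t := hx; have hy' : c * ω 0 + d * ω 2 = t := hy; linarith)
            | exact h4 (-c) (-d) a b (pmneg hc) (pmneg hd) ha hb (by have hx' : a * ω 2 + b * ω 3 = t := hx; have hy' : c * ω 0 + d * ω 1 = t := hy; linarith)

set_option maxHeartbeats 3200000 in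
/-- No three pairwise-distinct long roots pair equally with a regular `ω`. -/
lemma longTriple {a b c d e f t : ℝ} {i j k l m n : Fin 4}
    (hij : i < j) (hkl : k < l) (hmn : m < n)
    (ha : a = 1 ∨ a = -1) (hb : b = 1 ∨ b = -1) (hc : c = 1 ∨ c = -1) (hd : d = 1 ∨ d = -1)
    (he : e = 1 ∨ e = -1) (hf : f = 1 ∨ f = -1)
    (hx : a * ω i + b * ω j = t) (hy : c * ω k + d * ω l = t) (hz : e * ω m + f * ω n = t) :
    (i = k ∧ j = l ∧ a = c ∧ b = d) ∨ (i = m ∧ j = n ∧ a = e ∧ b = f) ∨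
    (k = m ∧ l = n ∧ c = e ∧ d = f) := by
  have ht : t ≠ 0 := by
    intro h; rw [h] at hx
    rcases ha with rfl|rfl <;> rcases hb with rfl|rfl <;>
      first
      | exact h2s i j (ne_of_lt hij) (by linarith)
      | exact h2d i j (ne_of_lt hij) (by linarith)
  rcases longPair h1 h2s h2d h4 hij hkl ha hb hc hd hx hy with h|C12
  · exact Or.inl h
  rcases longPair h1 h2s h2d h4 hij hmn ha hb he hf hx hz with h|C13
  · exact Or.inr (Or.inl h)
  rcases longPair h1 h2s h2d h4 hkl hmn hc hd he hf hy hz with h|C23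
  · exact Or.inr (Or.inr h)
  exfalso
  rcases C12 with ⟨rfl,p2,p3⟩|⟨rfl,p3⟩|⟨rfl,p3⟩|⟨rfl,p2,p3⟩ <;>
  rcases C13 with ⟨rfl,q2,q3⟩|⟨rfl,q3⟩|⟨rfl,q3⟩|⟨rfl,q2,q3⟩ <;>
  rcases C23 with ⟨r1,r2,r3⟩|⟨r1,r3⟩|⟨r1,r3⟩|⟨r1,r2,r3⟩ <;>
    first
    | omega
    | (try subst r1
       first
       | omega
       | (rcases ha with rfl|rfl <;> linarith)
       | (rcases hb with rfl|rfl <;> linarith)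
       | (rcases hc with rfl|rfl <;> linarith)
       | (rcases hd with rfl|rfl <;> linarith)
       | (rcases he with rfl|rfl <;> linarith)
       | (rcases hf with rfl|rfl <;> linarith)
       | (rcases ha with rfl|rfl <;> rcases hb with rfl|rfl <;> rcases hc with rfl|rfl <;>
       rcases hd with rfl|rfl <;> rcases he with rfl|rfl <;> rcases hf with rfl|rfl <;>
       exact ht (by linarith)))

lemma n1 (s : ℝ) (k : Fin 4) (hs : s = 1 ∨ s = -1) : s * ω k ≠ 0 := by
  intro h; rcases hs with rfl|rfl <;> exact h1 k (by linarith)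

lemma n2 (s s' : ℝ) (i j : Fin 4) (hij : i ≠ j) (hs : s = 1 ∨ s = -1) (hs' : s' = 1 ∨ s' = -1) :
    s * ω i + s' * ω j ≠ 0 := by
  intro h
  rcases hs with rfl|rfl <;> rcases hs' with rfl|rfl <;>
    first
    | exact h2s i j hij (by linarith)
    | exact h2d i j hij (by linarith)

/-- Two short roots of type `±e_i` with the same value coincide. -/
lemma shortAA {a c t : ℝ} {i k : Fin 4} (ha : a = 1 ∨ a = -1) (hc : c = 1 ∨ c = -1)
    (hx : a * ω i = t) (hy : c * ω k = t) : i = k ∧ a = c := by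
  rcases eq_or_ne i k with rfl|hik
  · have hac : a = c ∨ a = -c := by rcases ha with rfl|rfl <;> rcases hc with rfl|rfl <;> norm_num
    rcases hac with h|h
    · exact ⟨rfl, h⟩
    · rw [h] at hx; exact absurd (show c * ω i = 0 by linarith) (n1 h1 h2s h2d h4 c i hc)
  · exfalso
    rcases ha with rfl|rfl <;> rcases hc with rfl|rfl <;>
      first
      | exact h2s i k hik (by linarith)
      | exact h2d i k hik (by linarith)

/-- Two half-sum short roots with the same value: equal, or they differ in exactly
three coordinates. -/
lemma shortBB {a b c d a' b' c' d' u : ℝ}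
    (ha : a = 1 ∨ a = -1) (hb : b = 1 ∨ b = -1) (hc : c = 1 ∨ c = -1) (hd : d = 1 ∨ d = -1)
    (ha' : a' = 1 ∨ a' = -1) (hb' : b' = 1 ∨ b' = -1) (hc' : c' = 1 ∨ c' = -1)
    (hd' : d' = 1 ∨ d' = -1)
    (hx : a * ω 0 + b * ω 1 + c * ω 2 + d * ω 3 = u)
    (hy : a' * ω 0 + b' * ω 1 + c' * ω 2 + d' * ω 3 = u) :
    (a = a' ∧ b = b' ∧ c = c' ∧ d = d') ∨
    (a = a' ∧ b = -b' ∧ c = -c' ∧ d = -d') ∨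
    (a = -a' ∧ b = b' ∧ c = -c' ∧ d = -d') ∨
    (a = -a' ∧ b = -b' ∧ c = c' ∧ d = -d') ∨
    (a = -a' ∧ b = -b' ∧ c = -c' ∧ d = d') := by
  have e0 : a = a' ∨ a = -a' := by rcases ha with rfl|rfl <;> rcases ha' with rfl|rfl <;> norm_num
  have e1 : b = b' ∨ b = -b' := by rcases hb with rfl|rfl <;> rcases hb' with rfl|rfl <;> norm_num
  have e2 : c = c' ∨ c = -c' := by rcases hc with rfl|rfl <;> rcases hc' with rfl|rfl <;> norm_num
  have e3 : d = d' ∨ d = -d' := by rcases hd with rfl|rfl <;> rcases hd' with rfl|rfl <;> norm_num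
  rcases e0 with e0|e0 <;> rcases e1 with e1|e1 <;> rcases e2 with e2|e2 <;> rcases e3 with e3|e3 <;>
    rw [e0,e1,e2,e3] at hx <;>
    first
    | exact Or.inl ⟨e0,e1,e2,e3⟩
    | exact Or.inr (Or.inl ⟨e0,e1,e2,e3⟩)
    | exact Or.inr (Or.inr (Or.inl ⟨e0,e1,e2,e3⟩))
    | exact Or.inr (Or.inr (Or.inr (Or.inl ⟨e0,e1,e2,e3⟩)))
    | exact Or.inr (Or.inr (Or.inr (Or.inr ⟨e0,e1,e2,e3⟩)))
    | exact absurd (show a' * ω 0 = 0 by linarith) (n1 h1 h2s h2d h4 a' 0 ha')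
    | exact absurd (show b' * ω 1 = 0 by linarith) (n1 h1 h2s h2d h4 b' 1 hb')
    | exact absurd (show c' * ω 2 = 0 by linarith) (n1 h1 h2s h2d h4 c' 2 hc')
    | exact absurd (show d' * ω 3 = 0 by linarith) (n1 h1 h2s h2d h4 d' 3 hd')
    | exact absurd (show a' * ω 0 + b' * ω 1 = 0 by linarith) (n2 h1 h2s h2d h4 a' b' 0 1 (by decide) ha' hb')
    | exact absurd (show a' * ω 0 + c' * ω 2 = 0 by linarith) (n2 h1 h2s h2d h4 a' c' 0 2 (by decide) ha' hc')
    | exact absurd (show a' * ω 0 + d' * ω 3 = 0 by linarith) (n2 h1 h2s h2d h4 a' d' 0 3 (by decide) ha' hd')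
    | exact absurd (show b' * ω 1 + c' * ω 2 = 0 by linarith) (n2 h1 h2s h2d h4 b' c' 1 2 (by decide) hb' hc')
    | exact absurd (show b' * ω 1 + d' * ω 3 = 0 by linarith) (n2 h1 h2s h2d h4 b' d' 1 3 (by decide) hb' hd')
    | exact absurd (show c' * ω 2 + d' * ω 3 = 0 by linarith) (n2 h1 h2s h2d h4 c' d' 2 3 (by decide) hc' hd')
    | exact absurd (show a' * ω 0 + b' * ω 1 + c' * ω 2 + d' * ω 3 = 0 by linarith) (h4 a' b' c' d' ha' hb' hc' hd')

/-- A short root `s e_i` and a half-sum short root with the same value: the half root has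
sign `-s` in slot `i`. -/
lemma shortAB {s a b c d t : ℝ} {i : Fin 4} (hs : s = 1 ∨ s = -1)
    (ha : a = 1 ∨ a = -1) (hb : b = 1 ∨ b = -1) (hc : c = 1 ∨ c = -1) (hd : d = 1 ∨ d = -1)
    (hx : s * ω i = t) (hy : a * ω 0 + b * ω 1 + c * ω 2 + d * ω 3 = 2 * t) :
    (i = 0 → a = -s) ∧ (i = 1 → b = -s) ∧ (i = 2 → c = -s) ∧ (i = 3 → d = -s) := by
  refine ⟨?_, ?_, ?_, ?_⟩ <;> rintro rfl
  · have e : a = s ∨ a = -s := by rcases ha with rfl|rfl <;> rcases hs with rfl|rfl <;> norm_num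
    rcases e with e|e
    · rw [e] at hy
      exact absurd (show (-s) * ω 0 + b * ω 1 + c * ω 2 + d * ω 3 = 0 by linarith)
        (h4 (-s) b c d (pmneg hs) hb hc hd)
    · exact e
  · have e : b = s ∨ b = -s := by rcases hb with rfl|rfl <;> rcases hs with rfl|rfl <;> norm_num
    rcases e with e|e
    · rw [e] at hy
      exact absurd (show a * ω 0 + (-s) * ω 1 + c * ω 2 + d * ω 3 = 0 by linarith)
        (h4 a (-s) c d ha (pmneg hs) hc hd)
    · exact e
  · have e : c = s ∨ c = -s := by rcases hc with rfl|rfl <;> rcases hs with rfl|rfl <;> norm_num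
    rcases e with e|e
    · rw [e] at hy
      exact absurd (show a * ω 0 + b * ω 1 + (-s) * ω 2 + d * ω 3 = 0 by linarith)
        (h4 a b (-s) d ha hb (pmneg hs) hd)
    · exact e
  · have e : d = s ∨ d = -s := by rcases hd with rfl|rfl <;> rcases hs with rfl|rfl <;> norm_num
    rcases e with e|e
    · rw [e] at hy
      exact absurd (show a * ω 0 + b * ω 1 + c * ω 2 + (-s) * ω 3 = 0 by linarith)
        (h4 a b c (-s) ha hb hc (pmneg hs))
    · exact e

set_option maxHeartbeats 1600000 in
/-- A short root `s e_i` and two half-sum roots with the same value force the two half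
roots to coincide. -/
lemma shortABB {s t a b c d a' b' c' d' : ℝ} {i : Fin 4} (hs : s = 1 ∨ s = -1)
    (ha : a = 1 ∨ a = -1) (hb : b = 1 ∨ b = -1) (hc : c = 1 ∨ c = -1) (hd : d = 1 ∨ d = -1)
    (ha' : a' = 1 ∨ a' = -1) (hb' : b' = 1 ∨ b' = -1) (hc' : c' = 1 ∨ c' = -1)
    (hd' : d' = 1 ∨ d' = -1)
    (hx : s * ω i = t)
    (hy : a * ω 0 + b * ω 1 + c * ω 2 + d * ω 3 = 2 * t)
    (hz : a' * ω 0 + b' * ω 1 + c' * ω 2 + d' * ω 3 = 2 * t) :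
    a = a' ∧ b = b' ∧ c = c' ∧ d = d' := by
  have P := shortAB h1 h2s h2d h4 hs ha hb hc hd hx hy
  have Q := shortAB h1 h2s h2d h4 hs ha' hb' hc' hd' hx hz
  have hs0 : s ≠ 0 := by rcases hs with rfl|rfl <;> norm_num
  rcases shortBB h1 h2s h2d h4 ha hb hc hd ha' hb' hc' hd' hy hz with
    h|⟨e0,e1,e2,e3⟩|⟨e0,e1,e2,e3⟩|⟨e0,e1,e2,e3⟩|⟨e0,e1,e2,e3⟩
  · exact h
  all_goals exfalso
  all_goals fin_cases i
  all_goals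
    first
    | exact absurd (show s = 0 by linarith [P.1 rfl, Q.1 rfl]) hs0
    | exact absurd (show s = 0 by linarith [P.2.1 rfl, Q.2.1 rfl]) hs0
    | exact absurd (show s = 0 by linarith [P.2.2.1 rfl, Q.2.2.1 rfl]) hs0
    | exact absurd (show s = 0 by linarith [P.2.2.2 rfl, Q.2.2.2 rfl]) hs0
    | exact absurd
        (show s * ω 0 = 0 by
          linarith [show s * ω (0:Fin 4) = t from hx,
            (by rw [P.1 rfl]; ring : a * ω 0 = -(s * ω 0)),
            (by rw [Q.1 rfl]; ring : a' * ω 0 = -(s * ω 0)),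
            (by rw [e1]; ring : b * ω 1 = -(b' * ω 1)),
            (by rw [e2]; ring : c * ω 2 = -(c' * ω 2)),
            (by rw [e3]; ring : d * ω 3 = -(d' * ω 3))])
        (n1 h1 h2s h2d h4 s 0 hs)
    | exact absurd
        (show s * ω 1 = 0 by
          linarith [show s * ω (1:Fin 4) = t from hx,
            (by rw [P.2.1 rfl]; ring : b * ω 1 = -(s * ω 1)),
            (by rw [Q.2.1 rfl]; ring : b' * ω 1 = -(s * ω 1)),
            (by rw [e0]; ring : a * ω 0 = -(a' * ω 0)),
            (by rw [e2]; ring : c * ω 2 = -(c' * ω 2)),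
            (by rw [e3]; ring : d * ω 3 = -(d' * ω 3))])
        (n1 h1 h2s h2d h4 s 1 hs)
    | exact absurd
        (show s * ω 2 = 0 by
          linarith [show s * ω (2:Fin 4) = t from hx,
            (by rw [P.2.2.1 rfl]; ring : c * ω 2 = -(s * ω 2)),
            (by rw [Q.2.2.1 rfl]; ring : c' * ω 2 = -(s * ω 2)),
            (by rw [e0]; ring : a * ω 0 = -(a' * ω 0)),
            (by rw [e1]; ring : b * ω 1 = -(b' * ω 1)),
            (by rw [e3]; ring : d * ω 3 = -(d' * ω 3))])
        (n1 h1 h2s h2d h4 s 2 hs)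
    | exact absurd
        (show s * ω 3 = 0 by
          linarith [show s * ω (3:Fin 4) = t from hx,
            (by rw [P.2.2.2 rfl]; ring : d * ω 3 = -(s * ω 3)),
            (by rw [Q.2.2.2 rfl]; ring : d' * ω 3 = -(s * ω 3)),
            (by rw [e0]; ring : a * ω 0 = -(a' * ω 0)),
            (by rw [e1]; ring : b * ω 1 = -(b' * ω 1)),
            (by rw [e2]; ring : c * ω 2 = -(c' * ω 2))])
        (n1 h1 h2s h2d h4 s 3 hs)

set_option maxHeartbeats 1600000 in
/-- Among three half-sum short roots with the same value, two coincide. -/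
lemma shortBBB {u a b c d a' b' c' d' a'' b'' c'' d'' : ℝ}
    (ha : a = 1 ∨ a = -1) (hb : b = 1 ∨ b = -1) (hc : c = 1 ∨ c = -1) (hd : d = 1 ∨ d = -1)
    (ha' : a' = 1 ∨ a' = -1) (hb' : b' = 1 ∨ b' = -1) (hc' : c' = 1 ∨ c' = -1)
    (hd' : d' = 1 ∨ d' = -1)
    (ha'' : a'' = 1 ∨ a'' = -1) (hb'' : b'' = 1 ∨ b'' = -1) (hc'' : c'' = 1 ∨ c'' = -1)
    (hd'' : d'' = 1 ∨ d'' = -1)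
    (hx : a * ω 0 + b * ω 1 + c * ω 2 + d * ω 3 = u)
    (hy : a' * ω 0 + b' * ω 1 + c' * ω 2 + d' * ω 3 = u)
    (hz : a'' * ω 0 + b'' * ω 1 + c'' * ω 2 + d'' * ω 3 = u) :
    (a = a' ∧ b = b' ∧ c = c' ∧ d = d') ∨ (a = a'' ∧ b = b'' ∧ c = c'' ∧ d = d'') ∨
    (a' = a'' ∧ b' = b'' ∧ c' = c'' ∧ d' = d'') := by
  rcases shortBB h1 h2s h2d h4 ha hb hc hd ha' hb' hc' hd' hx hy with h|C12|C12|C12|C12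
  · exact Or.inl h
  all_goals
    rcases shortBB h1 h2s h2d h4 ha hb hc hd ha'' hb'' hc'' hd'' hx hz with h|C13|C13|C13|C13
  all_goals try exact Or.inr (Or.inl h)
  all_goals
    rcases shortBB h1 h2s h2d h4 ha' hb' hc' hd' ha'' hb'' hc'' hd'' hy hz with h|C23|C23|C23|C23
  all_goals try exact Or.inr (Or.inr h)
  all_goals exfalso
  all_goals obtain ⟨e0,e1,e2,e3⟩ := C12
  all_goals obtain ⟨f0,f1,f2,f3⟩ := C13
  all_goals obtain ⟨g0,g1,g2,g3⟩ := C23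
  all_goals
    first
    | exact absurd (show a'' = 0 by linarith) (by rcases ha'' with rfl|rfl <;> norm_num)
    | exact absurd (show b'' = 0 by linarith) (by rcases hb'' with rfl|rfl <;> norm_num)
    | exact absurd (show c'' = 0 by linarith) (by rcases hc'' with rfl|rfl <;> norm_num)
    | exact absurd (show d'' = 0 by linarith) (by rcases hd'' with rfl|rfl <;> norm_num)
end

/-- A set in which among any three elements two coincide has at most two elements. -/
lemma ncard_le_two_of_triple {X : Type*} {S : Set X}
    (h : ∀ x ∈ S, ∀ y ∈ S, ∀ z ∈ S, x = y ∨ x = z ∨ y = z) : S.ncard ≤ 2 := by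
  rcases S.eq_empty_or_nonempty with rfl|⟨x,hx⟩
  · simp
  by_cases hsub : S ⊆ {x}
  · exact (Set.ncard_le_ncard hsub (Set.finite_singleton x)).trans (by simp)
  obtain ⟨y, hy, hyx⟩ := Set.not_subset.mp hsub
  have hxy : x ≠ y := fun h' => hyx (by simp [← h'])
  have hS : S ⊆ {x, y} := by
    intro z hz
    rcases h z hz x hx y hy with h'|h'|h'
    · exact Or.inl h'
    · exact Or.inr h'
    · exact absurd h'.symm (by simpa using hyx)
  refine (Set.ncard_le_ncard hS ((Set.finite_singleton y).insert x)).trans ?_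
  rw [Set.ncard_pair hxy]

lemma classifyShort {ω : EuclideanSpace ℝ (Fin 4)} (t : ℝ) (v : EuclideanSpace ℝ (Fin 4))
    (hv : v ∈ PhiF4) (hn : ‖v‖^2 = 1) (ht : ⟪ω,v⟫ = t) :
    (∃ s : ℝ, ∃ i : Fin 4, (s = 1 ∨ s = -1) ∧ v = s • e4 i ∧ s * ω i = t) ∨
    (∃ ε : Fin 4 → ℝ, (∀ k, ε k = 1 ∨ ε k = -1) ∧
      v = (1/2:ℝ) • (ε 0 • e4 0 + ε 1 • e4 1 + ε 2 • e4 2 + ε 3 • e4 3) ∧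
      ε 0 * ω 0 + ε 1 * ω 1 + ε 2 * ω 2 + ε 3 * ω 3 = 2 * t) := by
  rcases hv with (⟨a,b,i,j,ha,hb,hij,rfl⟩|⟨s,i,hs,rfl⟩)|⟨ε,hε,rfl⟩
  · rw [normL a b i j (ne_of_lt hij) ha hb] at hn; norm_num at hn
  · rw [innerA] at ht; exact Or.inl ⟨s,i,hs,rfl,ht⟩
  · rw [innerB] at ht; exact Or.inr ⟨ε,hε,rfl, by linarith⟩

lemma classifyLong {ω : EuclideanSpace ℝ (Fin 4)} (t : ℝ) (v : EuclideanSpace ℝ (Fin 4))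
    (hv : v ∈ PhiF4) (hn : ‖v‖^2 = 2) (ht : ⟪ω,v⟫ = t) :
    ∃ a b : ℝ, ∃ i j : Fin 4, (a = 1 ∨ a = -1) ∧ (b = 1 ∨ b = -1) ∧ i < j ∧
      v = a • e4 i + b • e4 j ∧ a * ω i + b * ω j = t := by
  rcases hv with (⟨a,b,i,j,ha,hb,hij,rfl⟩|⟨s,i,hs,rfl⟩)|⟨ε,hε,rfl⟩
  · rw [innerL] at ht; exact ⟨a,b,i,j,ha,hb,hij,rfl,ht⟩
  · rw [normA s i hs] at hn; norm_num at hn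
  · rw [normB ε hε] at hn; norm_num at hn

/-- F₄ case: for `ω` regular for `F₄` and any `t`, at most two short roots (squared norm 1)
pair with `ω` to `t`, and at most two long roots (squared norm 2) pair with `ω` to `t`. -/
theorem statement15 (ω : EuclideanSpace ℝ (Fin 4))
    (hω : ∀ α ∈ PhiF4, ⟪ω, α⟫ ≠ 0) (t : ℝ) :
    Set.ncard {γ ∈ PhiF4 | ‖γ‖ ^ 2 = 1 ∧ ⟪ω, γ⟫ = t} ≤ 2 ∧
    Set.ncard {α ∈ PhiF4 | ‖α‖ ^ 2 = 2 ∧ ⟪ω, α⟫ = t} ≤ 2 := by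
  have H1 := reg1 hω
  have H2s := reg2s hω
  have H2d := reg2d hω
  have H4 := reg4 hω
  constructor
  · refine ncard_le_two_of_triple ?_
    rintro x ⟨hxΦ,hxn,hxt⟩ y ⟨hyΦ,hyn,hyt⟩ z ⟨hzΦ,hzn,hzt⟩
    rcases classifyShort t x hxΦ hxn hxt with ⟨s,i,hs,hxe,hxv⟩|⟨ε,hε,hxe,hxv⟩ <;>
      rcases classifyShort t y hyΦ hyn hyt with ⟨s',k,hs',hye,hyv⟩|⟨ε',hε',hye,hyv⟩ <;>
      rcases classifyShort t z hzΦ hzn hzt with ⟨s'',m,hs'',hze,hzv⟩|⟨ε'',hε'',hze,hzv⟩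
    · obtain ⟨h₁, h₂⟩ := shortAA H1 H2s H2d H4 hs hs' hxv hyv
      left; rw [hxe, hye, h₁, h₂]
    · obtain ⟨h₁, h₂⟩ := shortAA H1 H2s H2d H4 hs hs' hxv hyv
      left; rw [hxe, hye, h₁, h₂]
    · obtain ⟨h₁, h₂⟩ := shortAA H1 H2s H2d H4 hs hs'' hxv hzv
      right; left; rw [hxe, hze, h₁, h₂]
    · obtain ⟨q0,q1,q2,q3⟩ := shortABB H1 H2s H2d H4 hs (hε' 0) (hε' 1) (hε' 2) (hε' 3)
        (hε'' 0) (hε'' 1) (hε'' 2) (hε'' 3) hxv hyv hzv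
      right; right; rw [hye, hze, q0, q1, q2, q3]
    · obtain ⟨h₁, h₂⟩ := shortAA H1 H2s H2d H4 hs' hs'' hyv hzv
      right; right; rw [hye, hze, h₁, h₂]
    · obtain ⟨q0,q1,q2,q3⟩ := shortABB H1 H2s H2d H4 hs' (hε 0) (hε 1) (hε 2) (hε 3)
        (hε'' 0) (hε'' 1) (hε'' 2) (hε'' 3) hyv hxv hzv
      right; left; rw [hxe, hze, q0, q1, q2, q3]
    · obtain ⟨q0,q1,q2,q3⟩ := shortABB H1 H2s H2d H4 hs'' (hε 0) (hε 1) (hε 2) (hε 3)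
        (hε' 0) (hε' 1) (hε' 2) (hε' 3) hzv hxv hyv
      left; rw [hxe, hye, q0, q1, q2, q3]
    · rcases shortBBB H1 H2s H2d H4 (hε 0) (hε 1) (hε 2) (hε 3) (hε' 0) (hε' 1) (hε' 2) (hε' 3)
        (hε'' 0) (hε'' 1) (hε'' 2) (hε'' 3) hxv hyv hzv with ⟨q0,q1,q2,q3⟩|⟨q0,q1,q2,q3⟩|⟨q0,q1,q2,q3⟩
      · left; rw [hxe, hye, q0, q1, q2, q3]
      · right; left; rw [hxe, hze, q0, q1, q2, q3]
      · right; right; rw [hye, hze, q0, q1, q2, q3]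
  · refine ncard_le_two_of_triple ?_
    rintro x ⟨hxΦ,hxn,hxt⟩ y ⟨hyΦ,hyn,hyt⟩ z ⟨hzΦ,hzn,hzt⟩
    obtain ⟨a,b,i,j,ha,hb,hij,hxe,hxv⟩ := classifyLong t x hxΦ hxn hxt
    obtain ⟨c,d,k,l,hc,hd,hkl,hye,hyv⟩ := classifyLong t y hyΦ hyn hyt
    obtain ⟨e,f,m,n,he,hf,hmn,hze,hzv⟩ := classifyLong t z hzΦ hzn hzt
    rcases longTriple H1 H2s H2d H4 hij hkl hmn ha hb hc hd he hf hxv hyv hzv with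
      ⟨p1,p2,p3,p4⟩|⟨p1,p2,p3,p4⟩|⟨p1,p2,p3,p4⟩
    · left; rw [hxe, hye, p1, p2, p3, p4]
    · right; left; rw [hxe, hze, p1, p2, p3, p4]
    · right; right; rw [hye, hze, p1, p2, p3, p4]
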